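/- For n ≥ 1, the polynomial v_n(x) defined by v_0 = 3, v_1 = x, v_2 = x^2, v_n = x·v_{n-1} - v_{n-3}, satisfies v_n(x) = Σ_{3j ≤ n} (-1)^j·(n/(n-2j))·C(n-2j, j)·x^{n-3j}. -/

import Mathlib

/-- `v_n(x)`: `v_0 = 3`, `v_1 = x`, `v_2 = x²`, `v_n = x·v_{n-1} - v_{n-3}`. -/
def vpoly {R : Type*} [CommRing R] (x : R) : ℕ → R
  | 0 => 3
  | 1 => x
  | 2 => x ^ 2
  | n + 3 => x * vpoly x (n + 2) - vpoly x n

/-- Integer form of the coefficient. -/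
def cc (n : ℕ) : ℕ → ℚ
  | 0 => 1
  | k + 1 => (Nat.choose (n - 2*k - 2) (k+1) : ℚ) + 2 * (Nat.choose (n - 2*k - 3) k : ℚ)

lemma cc_conv (n j : ℕ) (hn : 1 ≤ n) (hj : 3*j ≤ n) :
    ((n : ℚ) / ((n : ℚ) - 2 * (j : ℚ))) * (Nat.choose (n - 2 * j) j : ℚ) = cc n j := by
  cases j with
  | zero =>
    simp [cc]
    omega
  | succ k =>
    obtain ⟨m, rfl⟩ : ∃ m, n = m + 2*k + 3 := ⟨n - (2*k+3), by omega⟩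
    have hkey : ((m+1 : ℕ) * Nat.choose m k : ℚ) = (Nat.choose (m+1) (k+1) * (k+1) : ℕ) := by
      exact_mod_cast congrArg (Nat.cast (R := ℚ)) (Nat.add_one_mul_choose_eq m k)
    have e1 : m + 2*k + 3 - 2*(k+1) = m + 1 := by omega
    have e2 : m + 2*k + 3 - 2*k - 2 = m + 1 := by omega
    have e3 : m + 2*k + 3 - 2*k - 3 = m := by omega
    rw [e1]
    show _ = cc (m + 2*k + 3) (k+1)
    rw [cc, e2, e3]
    have hden : ((m + 2*k + 3 : ℕ) : ℚ) - 2 * ((k+1 : ℕ) : ℚ) = (m:ℚ) + 1 := by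
      push_cast; ring
    rw [hden, div_mul_eq_mul_div, div_eq_iff (by positivity)]
    push_cast at hkey ⊢
    linear_combination (-2) * hkey

lemma cc_zero' (n k : ℕ) (h : n < 3*(k+1)) (hn : 3 ≤ n) : cc n (k+1) = 0 := by
  rw [cc]
  have h1 : Nat.choose (n - 2*k - 2) (k+1) = 0 := Nat.choose_eq_zero_of_lt (by omega)
  have hk : 1 ≤ k := by omega
  have h2 : Nat.choose (n - 2*k - 3) k = 0 := Nat.choose_eq_zero_of_lt (by omega)
  rw [h1, h2]; norm_num

lemma cc_rec (n k : ℕ) (hn : 4 ≤ n) (h : 3*(k+1) ≤ n) :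
    cc n (k+1) = cc (n-1) (k+1) + cc (n-3) k := by
  cases k with
  | zero =>
    obtain ⟨m, rfl⟩ : ∃ m, n = m + 4 := ⟨n - 4, by omega⟩
    show (Nat.choose (m+4-2) 1 : ℚ) + 2 * (Nat.choose (m+4-3) 0 : ℚ)
        = ((Nat.choose (m+4-1-2) 1 : ℚ) + 2 * (Nat.choose (m+4-1-3) 0 : ℚ)) + 1
    norm_num [Nat.choose_one_right]
    ring
  | succ k =>
    obtain ⟨m, rfl⟩ : ∃ m, n = m + 2*k + 6 := ⟨n - (2*k+6), by omega⟩
    have e1 : m + 2*k + 6 - 2*(k+1) - 2 = m + 2 := by omega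
    have e2 : m + 2*k + 6 - 2*(k+1) - 3 = m + 1 := by omega
    have e3 : m + 2*k + 6 - 1 - 2*(k+1) - 2 = m + 1 := by omega
    have e4 : m + 2*k + 6 - 1 - 2*(k+1) - 3 = m := by omega
    have e5 : m + 2*k + 6 - 3 - 2*k - 2 = m + 1 := by omega
    have e6 : m + 2*k + 6 - 3 - 2*k - 3 = m := by omega
    show (Nat.choose (m + 2*k + 6 - 2*(k+1) - 2) (k+2) : ℚ) + 2 * (Nat.choose (m + 2*k + 6 - 2*(k+1) - 3) (k+1) : ℚ)
      = ((Nat.choose (m + 2*k + 6 - 1 - 2*(k+1) - 2) (k+2) : ℚ) + 2 * (Nat.choose (m + 2*k + 6 - 1 - 2*(k+1) - 3) (k+1) : ℚ))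
        + ((Nat.choose (m + 2*k + 6 - 3 - 2*k - 2) (k+1) : ℚ) + 2 * (Nat.choose (m + 2*k + 6 - 3 - 2*k - 3) k : ℚ))
    rw [e1, e2, e3, e4, e5, e6]
    have p1 : (Nat.choose (m+2) (k+2) : ℚ) = Nat.choose (m+1) (k+1) + Nat.choose (m+1) (k+2) := by
      exact_mod_cast congrArg (Nat.cast (R := ℚ)) (Nat.choose_succ_succ (m+1) (k+1))
    have p2 : (Nat.choose (m+1) (k+1) : ℚ) = Nat.choose m k + Nat.choose m (k+1) := by
      exact_mod_cast congrArg (Nat.cast (R := ℚ)) (Nat.choose_succ_succ m k)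
    linarith

open Polynomial

noncomputable def S (n : ℕ) : Polynomial ℚ :=
  ∑ j ∈ Finset.range (n / 3 + 1), Polynomial.C ((-1 : ℚ)^j * cc n j) * X^(n - 3*j)

lemma S_rec (n : ℕ) (hn : 4 ≤ n) : S n = X * S (n-1) - S (n-3) := by
  have hsub : Finset.range ((n-1)/3 + 1) ⊆ Finset.range (n/3 + 1) :=
    Finset.range_subset_range.mpr (by omega)
  have hX : X * S (n-1)
      = ∑ j ∈ Finset.range (n/3 + 1), Polynomial.C ((-1:ℚ)^j * cc (n-1) j) * X^(n - 3*j) := by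
    have hsmall : X * S (n-1)
        = ∑ j ∈ Finset.range ((n-1)/3 + 1), Polynomial.C ((-1:ℚ)^j * cc (n-1) j) * X^(n - 3*j) := by
      rw [S, Finset.mul_sum]
      apply Finset.sum_congr rfl
      intro j hj
      have h3 : 3*j ≤ n - 1 := by
        have := Finset.mem_range.mp hj; omega
      have he : n - 1 - 3*j + 1 = n - 3*j := by omega
      rw [mul_comm X, mul_assoc, ← pow_succ, he]
    refine hsmall.trans (Finset.sum_subset hsub ?_)
    intro j hj1 hj2
    have hj1' := Finset.mem_range.mp hj1
    have hj2' : (n-1)/3 + 1 ≤ j := by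
      by_contra hc
      exact hj2 (Finset.mem_range.mpr (by omega))
    obtain ⟨k, rfl⟩ : ∃ k, j = k + 1 := ⟨j - 1, by omega⟩
    rw [cc_zero' (n-1) k (by omega) (by omega)]
    simp
  rw [hX, S, S]
  have hM : (n-3)/3 + 1 = n/3 := by omega
  rw [hM, Finset.sum_range_succ' (fun j => Polynomial.C ((-1:ℚ)^j * cc n j) * X^(n - 3*j)),
    Finset.sum_range_succ' (fun j => Polynomial.C ((-1:ℚ)^j * cc (n-1) j) * X^(n - 3*j))]
  have h0 : cc n 0 = cc (n-1) 0 := rfl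
  rw [h0, eq_sub_iff_add_eq, add_right_comm]
  congr 1
  rw [← Finset.sum_add_distrib]
  apply Finset.sum_congr rfl
  intro j hj
  have hj' : j < n/3 := Finset.mem_range.mp hj
  have h3 : 3*(j+1) ≤ n := by omega
  have he : n - 3 - 3*j = n - 3*(j+1) := by omega
  rw [he, ← add_mul, ← Polynomial.C_add]
  congr 2
  rw [cc_rec n j (by omega) h3]
  ring

lemma vpoly_eq_S (n : ℕ) (hn : 1 ≤ n) : vpoly (X : Polynomial ℚ) n = S n := by
  induction n using Nat.strong_induction_on with
  | _ n ih =>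
    match n, hn with
    | 1, _ => simp [vpoly, S, cc]
    | 2, _ => simp [vpoly, S, cc]
    | 3, _ =>
      show (X : Polynomial ℚ) * vpoly X 2 - vpoly X 0 = S 3
      rw [S]
      show (X : Polynomial ℚ) * X^2 - 3 = _
      norm_num [Finset.sum_range_succ, cc]
      rw [show ((3:ℚ[X])) = Polynomial.C 3 from (map_ofNat Polynomial.C 3).symm]
      ring
    | (n+4), _ =>
      show (X : Polynomial ℚ) * vpoly X (n+3) - vpoly X (n+1) = S (n+4)
      rw [ih (n+3) (by omega) (by omega), ih (n+1) (by omega) (by omega),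
        S_rec (n+4) (by omega), show n+4-1 = n+3 from rfl, show n+4-3 = n+1 from rfl]

open Polynomial in
/-- For `n ≥ 1`, `v_n(x) = Σ_{3j ≤ n} (-1)^j·(n/(n-2j))·C(n-2j,j)·x^{n-3j}` (in `ℚ[x]`). -/
theorem vpoly_explicit (n : ℕ) (hn : 1 ≤ n) :
    vpoly (X : Polynomial ℚ) n =
      ∑ j ∈ Finset.range (n / 3 + 1),
        Polynomial.C ((-1 : ℚ) ^ j * ((n : ℚ) / ((n : ℚ) - 2 * (j : ℚ))) *
            (Nat.choose (n - 2 * j) j : ℚ)) *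
          X ^ (n - 3 * j) := by
  rw [vpoly_eq_S n hn, S]
  apply Finset.sum_congr rfl
  intro j hj
  have h3 : 3*j ≤ n := by
    have := Finset.mem_range.mp hj; omega
  rw [mul_assoc, cc_conv n j hn h3]
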